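/- Pgf of the sum on a star: let T be the d-vertex star (one central vertex connected by an edge to each of the other d − 1 vertices), d ≥ 2, let λ > 0, let α ∈ [0,1], and let N ~ MPMRF(λ, α, T) with α_e = α for every edge e. Then M = Σ_{v∈V} N_v has pgf E[t^M] = exp( λ(α + (1−α)d) · ( [ t(1−α+αt)^{d−1} + (1−α)(d−1)t ] / (α + (1−α)d) − 1 ) ) for t ∈ [−1,1]. Equivalently, M is compound Poisson whose secondary distribution is a mixture of a point mass at 1 and a Binomial(d−1, α) distribution shifted by one. -/

import Mathlib

/-!
A vertex whose parent takes the value `k` receives `k` independent Bernoulli(α) indicators.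
Conditioning on everything else (the freezing lemma), `t ^ (α ∘ k)` may therefore be replaced by
its mean `(1 - α + α t) ^ k`. On the star rooted at the centre one such step leaves
`E[(t (1 - α + α t) ^ (d - 1)) ^ L₀ · t ^ (L₁ + ⋯ + L_{d-1})]`, a product of independent
Poisson pgfs. Rooted at a leaf `r`, one step at the centre and a second one at `r` lead to the
same value `exp(λ(t(1 - α + αt)^{d-1} - 1)) · exp(λ(1 - α)(t - 1))^{d-1}`.
-/

open MeasureTheory ProbabilityTheory
open scoped ProbabilityTheory

/-- The Poisson probability mass function with mean `lam`, evaluated at `k`. -/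
noncomputable def poissonProb (lam : ℝ) (k : ℕ) : ℝ :=
  Real.exp (-lam) * lam ^ k / (Nat.factorial k)

/-- The MPMRF construction: a tree-structured Markov random field with Poisson(`lam`)
marginals, built on a tree `G` rooted at `root` via the stochastic representation
`N_root = L_root` and `N_v = α_{(pa v, v)} ∘ N_{pa v} + L_v` for `v ≠ root`, where `∘`
denotes binomial thinning (realized through the i.i.d. Bernoulli indicators `I v i`),
the innovations `L_v` are Poisson, and all innovations and indicator sequences are
mutually independent. -/
structure MPMRF {V : Type} [Fintype V] [DecidableEq V]
    (G : SimpleGraph V) (lam : ℝ) (alpha : Sym2 V → ℝ)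
    (Ω : Type) [MeasureSpace Ω] : Type where
  /-- the underlying graph is a tree -/
  isTree : G.IsTree
  lam_pos : 0 < lam
  alpha_mem : ∀ e ∈ G.edgeSet, alpha e ∈ Set.Icc (0 : ℝ) 1
  /-- the chosen root -/
  root : V
  /-- the parent function of the rooted tree -/
  pa : V → V
  pa_adj : ∀ v, v ≠ root → G.Adj (pa v) v
  pa_dist : ∀ v, v ≠ root → G.dist root (pa v) + 1 = G.dist root v
  /-- innovation random variables -/
  L : V → Ω → ℕ
  /-- Bernoulli indicators used in the binomial thinnings -/
  I : V → ℕ → Ω → ℕ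
  /-- the components of the Markov random field -/
  N : V → Ω → ℕ
  meas_L : ∀ v, Measurable (L v)
  meas_I : ∀ v i, Measurable (I v i)
  meas_N : ∀ v, Measurable (N v)
  I_le_one : ∀ v i ω, I v i ω ≤ 1
  I_bern : ∀ v, v ≠ root → ∀ i,
    ℙ {ω | I v i ω = 1} = ENNReal.ofReal (alpha s(pa v, v))
  L_root_poisson : ∀ k, ℙ {ω | L root ω = k} = ENNReal.ofReal (poissonProb lam k)
  L_poisson : ∀ v, v ≠ root → ∀ k,
    ℙ {ω | L v ω = k} =
      ENNReal.ofReal (poissonProb (lam * (1 - alpha s(pa v, v))) k)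
  /-- the innovations and all indicator variables are mutually independent -/
  indep : iIndepFun
    (Sum.elim L (fun p : V × ℕ => I p.1 p.2)) ℙ
  N_root : N root = L root
  N_rec : ∀ v, v ≠ root → ∀ ω,
    N v ω = (∑ i ∈ Finset.range (N (pa v) ω), I v i ω) + L v ω

/-- The `d`-vertex star: vertex `0` is connected by an edge to every other vertex. -/
def starGraph (d : ℕ) [NeZero d] : SimpleGraph (Fin d) where
  Adj i j := i ≠ j ∧ (i = 0 ∨ j = 0)
  symm := by
    constructor
    intro i j h
    exact ⟨h.1.symm, h.2.symm⟩
  loopless := by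
    constructor
    intro i h
    exact h.1 rfl

open Finset

section Freezing

variable {Ω : Type*}

theorem measurable_apply_comp_of_countable {κ β : Type*} {mΩ : MeasurableSpace Ω}
    [MeasurableSpace κ] [Countable κ] [MeasurableSingletonClass κ] [MeasurableSpace β]
    {X : Ω → κ} {G : κ → Ω → β} (hX : Measurable X) (hG : ∀ k, Measurable (G k)) :
    Measurable fun ω => G (X ω) ω :=
  (measurable_from_prod_countable_left (f := fun p : Ω × κ => G p.2 p.1) hG).comp
    (measurable_id.prodMk hX)

theorem hasSum_setIntegral_preimage_singleton {κ E : Type*} {mΩ : MeasurableSpace Ω}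
    {μ : Measure Ω} [MeasurableSpace κ] [Countable κ] [MeasurableSingletonClass κ]
    [NormedAddCommGroup E] [NormedSpace ℝ E] {X : Ω → κ} (hX : Measurable X) {f : Ω → E}
    (hf : Integrable f μ) :
    HasSum (fun k => ∫ ω in X ⁻¹' {k}, f ω ∂μ) (∫ ω, f ω ∂μ) := by
  have h := hasSum_integral_iUnion (fun k => hX (measurableSet_singleton k))
    (pairwise_disjoint_fiber X) hf.integrableOn
  rwa [← Set.preimage_iUnion, Set.iUnion_of_singleton, Set.preimage_univ,
    setIntegral_univ] at h

/-- The freezing lemma, for a discrete `X`. -/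
theorem ProbabilityTheory.Indep.integral_mul_apply_comp {m₁ m₂ mΩ : MeasurableSpace Ω}
    {μ : Measure Ω} [IsFiniteMeasure μ] (hm₁ : m₁ ≤ mΩ) (hm₂ : m₂ ≤ mΩ)
    (hind : Indep m₁ m₂ μ) {X : Ω → ℕ} {Y : Ω → ℝ} {Z : ℕ → Ω → ℝ} {D : ℝ}
    (hX : Measurable[m₁] X) (hY : Measurable[m₁] Y) (hYi : Integrable Y μ)
    (hZ : ∀ k, Measurable[m₂] (Z k)) (hZD : ∀ k ω, ‖Z k ω‖ ≤ D) :
    ∫ ω, Y ω * Z (X ω) ω ∂μ = ∫ ω, Y ω * ∫ ω', Z (X ω) ω' ∂μ ∂μ := by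
  have hX' : Measurable X := hX.mono hm₁ le_rfl
  have hfiber : ∀ k, ∫ ω in X ⁻¹' {k}, Y ω * Z (X ω) ω ∂μ
      = ∫ ω in X ⁻¹' {k}, Y ω * ∫ ω', Z (X ω) ω' ∂μ ∂μ := by
    intro k
    have hs : MeasurableSet[m₁] (X ⁻¹' {k}) := hX (measurableSet_singleton k)
    have hindep : IndepFun ((X ⁻¹' {k}).indicator Y) (Z k) μ :=
      (IndepFun_iff_Indep _ _ _).2
        (indep_of_indep_of_le hind (hY.indicator hs).comap_le (hZ k).comap_le)
    calc ∫ ω in X ⁻¹' {k}, Y ω * Z (X ω) ω ∂μ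
        = ∫ ω, (X ⁻¹' {k}).indicator Y ω * Z k ω ∂μ := by
          rw [← integral_indicator (hm₁ _ hs)]
          congr with ω
          by_cases hω : ω ∈ X ⁻¹' {k}
          · simp [hω, show X ω = k from hω]
          · simp [hω]
      _ = (∫ ω in X ⁻¹' {k}, Y ω ∂μ) * ∫ ω, Z k ω ∂μ := by
          rw [hindep.integral_fun_mul_eq_mul_integral
            ((hY.indicator hs).mono hm₁ le_rfl).aestronglyMeasurable
            ((hZ k).mono hm₂ le_rfl).aestronglyMeasurable, integral_indicator (hm₁ _ hs)]
      _ = ∫ ω in X ⁻¹' {k}, Y ω * ∫ ω', Z (X ω) ω' ∂μ ∂μ := by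
          rw [← integral_mul_const]
          exact setIntegral_congr_fun (hm₁ _ hs) fun ω hω => by rw [show X ω = k from hω]
  have hYZ : Integrable (fun ω => Y ω * Z (X ω) ω) μ :=
    hYi.mul_bdd (measurable_apply_comp_of_countable hX' fun k =>
      (hZ k).mono hm₂ le_rfl).aestronglyMeasurable (ae_of_all _ fun ω => hZD (X ω) ω)
  have hYφ : Integrable (fun ω => Y ω * ∫ ω', Z (X ω) ω' ∂μ) μ :=
    hYi.mul_bdd ((measurable_from_nat (f := fun k => ∫ ω', Z k ω' ∂μ)).comp
      hX').aestronglyMeasurable (ae_of_all _ fun ω => by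
        simpa using norm_integral_le_of_norm_le_const (μ := μ) (ae_of_all _ (hZD (X ω))))
  exact (hasSum_setIntegral_preimage_singleton hX' hYZ).unique
    (funext hfiber ▸ hasSum_setIntegral_preimage_singleton hX' hYφ)

end Freezing

section Pgf

variable {Ω : Type*} {mΩ : MeasurableSpace Ω} {μ : Measure Ω}

theorem abs_pow_le_one {t : ℝ} (ht : |t| ≤ 1) (n : ℕ) : |t ^ n| ≤ 1 := by
  rw [abs_pow]
  exact pow_le_one₀ (abs_nonneg t) ht

theorem abs_one_sub_add_mul_le_one {a t : ℝ} (ha : a ∈ Set.Icc (0 : ℝ) 1) (ht : |t| ≤ 1) :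
    |1 - a + a * t| ≤ 1 := by
  obtain ⟨ha0, ha1⟩ := ha
  obtain ⟨ht0, ht1⟩ := abs_le.1 ht
  exact abs_le.2 ⟨by nlinarith, by nlinarith⟩

theorem hasSum_poissonProb_mul_pow (r x : ℝ) :
    HasSum (fun k => poissonProb r k * x ^ k) (Real.exp (r * (x - 1))) := by
  have h := (NormedSpace.expSeries_div_hasSum_exp (r * x)).mul_left (Real.exp (-r))
  rw [← Real.exp_eq_exp_ℝ, ← Real.exp_add, show -r + r * x = r * (x - 1) by ring] at h
  refine h.congr_fun fun k => ?_
  rw [poissonProb, mul_pow]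
  ring

theorem integral_comp_eq_tsum_of_nat [IsFiniteMeasure μ] {X : Ω → ℕ} (hX : Measurable X)
    {g : ℕ → ℝ} {C : ℝ} (hg : ∀ k, |g k| ≤ C) :
    ∫ ω, g (X ω) ∂μ = ∑' k, μ.real (X ⁻¹' {k}) * g k := by
  have hgX : Integrable (fun ω => g (X ω)) μ :=
    .of_bound (measurable_from_nat.comp hX).aestronglyMeasurable C (ae_of_all _ fun ω => hg (X ω))
  refine (hasSum_setIntegral_preimage_singleton hX hgX).tsum_eq.symm.trans ?_
  congr with k
  rw [setIntegral_congr_fun (hX (measurableSet_singleton k)) (g := fun _ => g k)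
    fun ω hω => by rw [show X ω = k from hω], setIntegral_const, smul_eq_mul]

theorem integral_pow_of_poisson [IsFiniteMeasure μ] {L : Ω → ℕ} (hL : Measurable L) {r : ℝ}
    (hr : 0 ≤ r) (hP : ∀ k, μ {ω | L ω = k} = ENNReal.ofReal (poissonProb r k)) {t : ℝ}
    (ht : |t| ≤ 1) : ∫ ω, t ^ L ω ∂μ = Real.exp (r * (t - 1)) := by
  rw [integral_comp_eq_tsum_of_nat hL (abs_pow_le_one ht)]
  refine ((hasSum_poissonProb_mul_pow r t).congr_fun fun k => ?_).tsum_eq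
  rw [measureReal_def, show L ⁻¹' {k} = {ω | L ω = k} from rfl, hP k,
    ENNReal.toReal_ofReal (by unfold poissonProb; positivity)]

theorem integral_pow_of_bernoulli [IsProbabilityMeasure μ] {I : Ω → ℕ} (hI : Measurable I)
    (hle : ∀ ω, I ω ≤ 1) {a : ℝ} (ha : 0 ≤ a) (hP : μ {ω | I ω = 1} = ENNReal.ofReal a)
    (s : ℝ) : ∫ ω, s ^ I ω ∂μ = 1 - a + a * s := by
  have hs : MeasurableSet {ω | I ω = 1} := hI (measurableSet_singleton 1)
  have hpow : ∀ ω, s ^ I ω = 1 + (s - 1) * {ω | I ω = 1}.indicator (fun _ => 1) ω := fun ω => by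
    rcases Nat.le_one_iff_eq_zero_or_eq_one.1 (hle ω) with h | h <;> simp [h]
  simp_rw [hpow]
  rw [integral_add (integrable_const 1) (((integrable_const (1 : ℝ)).indicator hs).const_mul _),
    integral_const_mul, integral_indicator_const 1 hs, measureReal_def, hP,
    ENNReal.toReal_ofReal ha]
  simp
  ring

end Pgf

section CoordinateSigma

variable {Ω ι β : Type*} {mΩ : MeasurableSpace Ω} [mβ : MeasurableSpace β]

abbrev sigmaCoords (F : ι → Ω → β) (S : Set ι) : MeasurableSpace Ω :=
  ⨆ j ∈ S, mβ.comap (F j)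

variable {F : ι → Ω → β}

theorem measurable_sigmaCoords {S : Set ι} {j : ι} (hj : j ∈ S) :
    Measurable[sigmaCoords F S] (F j) :=
  Measurable.of_comap_le (le_iSup₂ (f := fun j (_ : j ∈ S) => mβ.comap (F j)) j hj)

theorem sigmaCoords_le (hF : ∀ j, Measurable (F j)) (S : Set ι) : sigmaCoords F S ≤ mΩ :=
  iSup₂_le fun j _ => (hF j).comap_le

theorem ProbabilityTheory.iIndepFun.indep_sigmaCoords {μ : Measure Ω} (h : iIndepFun F μ)
    (hF : ∀ j, Measurable (F j)) {S T : Set ι} (hST : Disjoint S T) :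
    Indep (sigmaCoords F S) (sigmaCoords F T) μ :=
  indep_iSup_of_disjoint (fun j => (hF j).comap_le) h hST

theorem ProbabilityTheory.iIndepFun.integral_finset_prod_comp {μ : Measure Ω}
    (h : iIndepFun F μ) (hF : ∀ j, Measurable (F j)) {g : ι → β → ℝ}
    (hg : ∀ j, Measurable (g j)) (s : Finset ι) :
    ∫ ω, ∏ j ∈ s, g j (F j ω) ∂μ = ∏ j ∈ s, ∫ ω, g j (F j ω) ∂μ := by
  have := (iIndepFun_iff_finset.1 h s).integral_fun_prod_comp (f := fun (j : s) => g j)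
    (fun j => (hF j).aemeasurable) (fun j => (hg j).aestronglyMeasurable)
  simp_rw [← Finset.prod_coe_sort s]
  exact this

end CoordinateSigma

namespace MPMRF

section General

variable {V : Type} [Fintype V] [DecidableEq V] {G : SimpleGraph V} {lam : ℝ}
  {alpha : Sym2 V → ℝ} {Ω : Type} [MeasureSpace Ω] (M : MPMRF G lam alpha Ω)

def inputs : V ⊕ V × ℕ → Ω → ℕ :=
  Sum.elim M.L fun p => M.I p.1 p.2

theorem measurable_inputs : ∀ j, Measurable (M.inputs j)
  | .inl v => M.meas_L v
  | .inr p => M.meas_I p.1 p.2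

theorem alpha_mem_Icc {v : V} (hv : v ≠ M.root) : alpha s(M.pa v, v) ∈ Set.Icc 0 1 :=
  M.alpha_mem _ (M.pa_adj v hv)

theorem integral_pow_L_root {t : ℝ} (ht : |t| ≤ 1) :
    ∫ ω, t ^ M.L M.root ω = Real.exp (lam * (t - 1)) :=
  have := M.indep.isProbabilityMeasure
  integral_pow_of_poisson (M.meas_L _) M.lam_pos.le M.L_root_poisson ht

theorem integral_pow_L {v : V} (hv : v ≠ M.root) {t : ℝ} (ht : |t| ≤ 1) :
    ∫ ω, t ^ M.L v ω = Real.exp (lam * (1 - alpha s(M.pa v, v)) * (t - 1)) :=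
  have := M.indep.isProbabilityMeasure
  integral_pow_of_poisson (M.meas_L v)
    (mul_nonneg M.lam_pos.le (sub_nonneg.2 (M.alpha_mem_Icc hv).2)) (M.L_poisson v hv) ht

theorem integral_pow_I {v : V} (hv : v ≠ M.root) (i : ℕ) (s : ℝ) :
    ∫ ω, s ^ M.I v i ω = 1 - alpha s(M.pa v, v) + alpha s(M.pa v, v) * s :=
  have := M.indep.isProbabilityMeasure
  integral_pow_of_bernoulli (M.meas_I v i) (M.I_le_one v i) (M.alpha_mem_Icc hv).1
    (M.I_bern v hv i) s

theorem integral_prod_L (g : V → ℕ → ℝ) (S : Finset V) :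
    ∫ ω, ∏ v ∈ S, g v (M.L v ω) = ∏ v ∈ S, ∫ ω, g v (M.L v ω) := by
  simpa [inputs] using M.indep.integral_finset_prod_comp M.measurable_inputs
    (g := Sum.elim g fun _ _ => 0) (fun _ => measurable_from_nat) (S.map .inl)

theorem integral_prod_I (g : V × ℕ → ℕ → ℝ) (S : Finset (V × ℕ)) :
    ∫ ω, ∏ p ∈ S, g p (M.I p.1 p.2 ω) = ∏ p ∈ S, ∫ ω, g p (M.I p.1 p.2 ω) := by
  simpa [inputs] using M.indep.integral_finset_prod_comp M.measurable_inputs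
    (g := Sum.elim (fun _ _ => 0) g) (fun _ => measurable_from_nat) (S.map .inr)

theorem integral_pow_sum_L {S : Finset V} (hS : ∀ v ∈ S, v ≠ M.root) {t : ℝ} (ht : |t| ≤ 1) :
    ∫ ω, t ^ ∑ v ∈ S, M.L v ω
      = ∏ v ∈ S, Real.exp (lam * (1 - alpha s(M.pa v, v)) * (t - 1)) := by
  simp_rw [← prod_pow_eq_pow_sum]
  rw [M.integral_prod_L (fun _ n => t ^ n)]
  exact prod_congr rfl fun v hv => M.integral_pow_L (hS v hv) ht

theorem integral_prod_pow_sum_I {S : Finset V} (hS : ∀ v ∈ S, v ≠ M.root) (k : ℕ) (s : ℝ) :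
    ∫ ω, ∏ v ∈ S, s ^ ∑ i ∈ range k, M.I v i ω
      = (∏ v ∈ S, (1 - alpha s(M.pa v, v) + alpha s(M.pa v, v) * s)) ^ k := by
  have hprod : ∀ ω, ∏ v ∈ S, s ^ ∑ i ∈ range k, M.I v i ω
      = ∏ p ∈ S ×ˢ range k, s ^ M.I p.1 p.2 ω := fun ω => by
    rw [prod_product]
    exact prod_congr rfl fun v _ => (prod_pow_eq_pow_sum _ _ _).symm
  simp_rw [hprod]
  rw [M.integral_prod_I (fun _ n => s ^ n), prod_product, ← prod_pow]
  refine prod_congr rfl fun v hv => ?_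
  rw [prod_congr rfl fun i _ => M.integral_pow_I (hS v hv) i s, prod_const, card_range]

theorem measurable_L_compl_singleton {x v : V} (hv : v ≠ x) :
    Measurable[sigmaCoords M.inputs {.inl x}ᶜ] (M.L v) :=
  measurable_sigmaCoords (F := M.inputs) (j := .inl v) (by simpa using hv)

theorem integral_comp_L_mul (x : V) (f : ℕ → ℝ) {W : Ω → ℝ}
    (hW : Measurable[sigmaCoords M.inputs {.inl x}ᶜ] W) :
    ∫ ω, f (M.L x ω) * W ω = (∫ ω, f (M.L x ω)) * ∫ ω, W ω := by
  have hind := M.indep.indep_sigmaCoords M.measurable_inputs (disjoint_compl_right (a := {.inl x}))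
  refine IndepFun.integral_fun_mul_eq_mul_integral ((IndepFun_iff_Indep _ _ _).2
    (indep_of_indep_of_le hind ?_ hW.comap_le)) ?_ ?_
  · exact ((measurable_from_nat (f := f)).comp
      (measurable_sigmaCoords (F := M.inputs) (Set.mem_singleton (Sum.inl x)))).comap_le
  · exact (measurable_from_nat.comp (M.meas_L x)).aestronglyMeasurable
  · exact (hW.mono (sigmaCoords_le M.measurable_inputs _) le_rfl).aestronglyMeasurable

def thinningCoords (S : Finset V) : Set (V ⊕ V × ℕ) :=
  Sum.inr '' {p | p.1 ∈ S}

theorem measurable_L_thinning (S : Finset V) (v : V) :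
    Measurable[sigmaCoords M.inputs (thinningCoords S)ᶜ] (M.L v) :=
  measurable_sigmaCoords (F := M.inputs) (j := .inl v) (by simp [thinningCoords])

theorem measurable_I_thinning_of_notMem {S : Finset V} {v : V} (hv : v ∉ S) (i : ℕ) :
    Measurable[sigmaCoords M.inputs (thinningCoords S)ᶜ] (M.I v i) :=
  measurable_sigmaCoords (F := M.inputs) (j := .inr (v, i)) (by simp [thinningCoords, hv])

theorem integral_mul_prod_pow_thinning {S : Finset V} (hS : ∀ v ∈ S, v ≠ M.root)
    {X : Ω → ℕ} {Y : Ω → ℝ} (hX : Measurable[sigmaCoords M.inputs (thinningCoords S)ᶜ] X)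
    (hY : Measurable[sigmaCoords M.inputs (thinningCoords S)ᶜ] Y) (hYb : ∀ ω, |Y ω| ≤ 1)
    {s : ℝ} (hs : |s| ≤ 1) :
    ∫ ω, Y ω * ∏ v ∈ S, s ^ ∑ i ∈ range (X ω), M.I v i ω
      = ∫ ω, Y ω * (∏ v ∈ S, (1 - alpha s(M.pa v, v) + alpha s(M.pa v, v) * s)) ^ X ω := by
  have := M.indep.isProbabilityMeasure
  have hle := sigmaCoords_le M.measurable_inputs
  refine ((M.indep.indep_sigmaCoords M.measurable_inputs disjoint_compl_left).integral_mul_apply_comp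
    (hle _) (hle _) hX hY (.of_bound (hY.mono (hle _) le_rfl).aestronglyMeasurable 1
      (ae_of_all _ hYb)) (Z := fun k ω => ∏ v ∈ S, s ^ ∑ i ∈ range k, M.I v i ω) (D := 1)
    (fun k => ?_) (fun k ω => ?_)).trans ?_
  · exact Finset.measurable_prod _ fun v hv => measurable_from_nat.comp
      (Finset.measurable_sum _ fun i _ => measurable_sigmaCoords (F := M.inputs)
        (j := .inr (v, i)) (by simp [thinningCoords, hv]))
  · rw [Real.norm_eq_abs, abs_prod]
    exact prod_le_one (fun _ _ => abs_nonneg _) fun _ _ => abs_pow_le_one hs _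
  · simp_rw [M.integral_prod_pow_sum_I hS]

end General

section Star

variable {d : ℕ} [NeZero d] {lam a : ℝ} {alpha : Sym2 (Fin d) → ℝ} {Ω : Type} [MeasureSpace Ω]
  (M : MPMRF (starGraph d) lam alpha Ω)

theorem star_pa_of_ne_zero {v : Fin d} (hv : v ≠ M.root) (hv0 : v ≠ 0) : M.pa v = 0 :=
  ((M.pa_adj v hv).2).resolve_right hv0

theorem star_pa_zero (h0 : (0 : Fin d) ≠ M.root) : M.pa 0 = M.root := by
  have hdist := M.pa_dist 0 h0
  rw [SimpleGraph.dist_eq_one_iff_adj.2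
    (show (starGraph d).Adj M.root 0 from ⟨h0.symm, Or.inr rfl⟩)] at hdist
  exact ((M.isTree.connected.preconnected _ _).dist_eq_zero_iff.1 (by omega)).symm

theorem star_alpha_eq (halpha : ∀ e ∈ (starGraph d).edgeSet, alpha e = a) {v : Fin d}
    (hv : v ≠ M.root) : alpha s(M.pa v, v) = a :=
  halpha _ (M.pa_adj v hv)

theorem star_sum_N_of_root_eq_zero (hr : M.root = 0) (ω : Ω) :
    ∑ v, M.N v ω = (M.L 0 ω + ∑ v ∈ univ.erase 0, M.L v ω)
      + ∑ v ∈ univ.erase 0, ∑ i ∈ range (M.L 0 ω), M.I v i ω := by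
  have hN0 : M.N 0 = M.L 0 := hr ▸ M.N_root
  have hO : ∀ v ∈ univ.erase 0, v ≠ M.root := fun v hv => hr ▸ ne_of_mem_erase hv
  rw [← add_sum_erase _ _ (mem_univ 0), hN0, sum_congr rfl fun v hv => by
    rw [M.N_rec v (hO v hv) ω, M.star_pa_of_ne_zero (hO v hv) (ne_of_mem_erase hv), hN0],
    sum_add_distrib]
  ring

theorem star_N_zero_of_root_ne_zero (hr : M.root ≠ 0) (ω : Ω) :
    M.N 0 ω = ∑ i ∈ range (M.L M.root ω), M.I 0 i ω + M.L 0 ω := by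
  rw [M.N_rec 0 hr.symm ω, M.star_pa_zero hr.symm, M.N_root]

def nonRootLeaves : Finset (Fin d) :=
  (univ.erase 0).erase M.root

theorem ne_of_mem_nonRootLeaves {v : Fin d} (hv : v ∈ M.nonRootLeaves) : v ≠ M.root ∧ v ≠ 0 :=
  ⟨ne_of_mem_erase hv, ne_of_mem_erase (mem_of_mem_erase hv)⟩

theorem card_nonRootLeaves_add_one (hr : M.root ≠ 0) : #M.nonRootLeaves + 1 = d - 1 := by
  rw [nonRootLeaves, card_erase_add_one (mem_erase.2 ⟨hr, mem_univ _⟩)]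
  simp

theorem star_sum_N_of_root_ne_zero (hr : M.root ≠ 0) (ω : Ω) :
    ∑ v, M.N v ω = (M.N 0 ω + M.L M.root ω + ∑ v ∈ M.nonRootLeaves, M.L v ω)
      + ∑ v ∈ M.nonRootLeaves, ∑ i ∈ range (M.N 0 ω), M.I v i ω := by
  have hO := fun v (hv : v ∈ M.nonRootLeaves) => M.ne_of_mem_nonRootLeaves hv
  rw [← add_sum_erase _ _ (mem_univ 0), ← add_sum_erase _ _ (mem_erase.2 ⟨hr, mem_univ _⟩),
    M.N_root, ← nonRootLeaves, sum_congr rfl fun v hv => by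
      rw [M.N_rec v (hO v hv).1 ω, M.star_pa_of_ne_zero (hO v hv).1 (hO v hv).2],
    sum_add_distrib]
  ring

theorem measurable_N_zero_of_root_ne_zero (hr : M.root ≠ 0) {S : Finset (Fin d)}
    (hS : 0 ∉ S) : Measurable[sigmaCoords M.inputs (thinningCoords S)ᶜ] (M.N 0) := by
  rw [funext (M.star_N_zero_of_root_ne_zero hr)]
  exact (measurable_apply_comp_of_countable (G := fun k ω => ∑ i ∈ range k, M.I 0 i ω)
    (M.measurable_L_thinning S _) fun k => Finset.measurable_sum _ fun i _ =>
      M.measurable_I_thinning_of_notMem hS i).add (M.measurable_L_thinning S 0)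

theorem integral_pow_sum_N_star_of_root_eq_zero
    (ha : a ∈ Set.Icc (0 : ℝ) 1) (halpha : ∀ e ∈ (starGraph d).edgeSet, alpha e = a)
    (hr : M.root = 0) {t : ℝ} (ht : |t| ≤ 1) :
    ∫ ω, t ^ ∑ v, M.N v ω = Real.exp (lam * (t * (1 - a + a * t) ^ (d - 1) - 1))
      * Real.exp (lam * (1 - a) * (t - 1)) ^ (d - 1) := by
  set O := univ.erase (0 : Fin d)
  have hO : ∀ v ∈ O, v ≠ M.root := fun v hv => hr ▸ ne_of_mem_erase hv
  have hL := M.measurable_L_thinning O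
  have hL' : ∀ v ∈ O, Measurable[sigmaCoords M.inputs {.inl 0}ᶜ] (M.L v) := fun v hv =>
    M.measurable_L_compl_singleton (ne_of_mem_erase hv)
  have hu : |t * (1 - a + a * t) ^ (d - 1)| ≤ 1 := by
    rw [abs_mul]
    exact mul_le_one₀ ht (abs_nonneg _) (abs_pow_le_one (abs_one_sub_add_mul_le_one ha ht) _)
  calc ∫ ω, t ^ ∑ v, M.N v ω
      = ∫ ω, t ^ (M.L 0 ω + ∑ v ∈ O, M.L v ω)
          * ∏ v ∈ O, t ^ ∑ i ∈ range (M.L 0 ω), M.I v i ω := by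
        congr with ω
        rw [M.star_sum_N_of_root_eq_zero hr, pow_add, prod_pow_eq_pow_sum]
    _ = ∫ ω, t ^ (M.L 0 ω + ∑ v ∈ O, M.L v ω)
          * (∏ v ∈ O, (1 - alpha s(M.pa v, v) + alpha s(M.pa v, v) * t)) ^ M.L 0 ω :=
        M.integral_mul_prod_pow_thinning hO (hL 0) (by fun_prop) (fun _ => abs_pow_le_one ht _) ht
    _ = ∫ ω, (t * (1 - a + a * t) ^ (d - 1)) ^ M.L 0 ω * t ^ ∑ v ∈ O, M.L v ω := by
        rw [prod_congr rfl fun v hv => by rw [M.star_alpha_eq halpha (hO v hv)], prod_const,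
          card_erase_of_mem (mem_univ 0), card_univ, Fintype.card_fin]
        simp_rw [pow_add, mul_pow]
        congr with ω
        ring
    _ = _ := by
        rw [M.integral_comp_L_mul 0 _ (by fun_prop (disch := assumption)),
          M.integral_pow_sum_L hO ht, ← hr, M.integral_pow_L_root hu,
          prod_congr rfl fun v hv => by rw [M.star_alpha_eq halpha (hO v hv)], prod_const,
          card_erase_of_mem (mem_univ _), card_univ, Fintype.card_fin]

theorem integral_pow_sum_N_star_eq_of_root_ne_zero
    (halpha : ∀ e ∈ (starGraph d).edgeSet, alpha e = a) (hr : M.root ≠ 0) {t : ℝ}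
    (ht : |t| ≤ 1) :
    ∫ ω, t ^ ∑ v, M.N v ω = ∫ ω, t ^ (M.L M.root ω + ∑ v ∈ M.nonRootLeaves, M.L v ω)
      * (t * (1 - a + a * t) ^ #M.nonRootLeaves) ^ M.N 0 ω := by
  set O := M.nonRootLeaves
  have hO : ∀ v ∈ O, v ≠ M.root := fun v hv => (M.ne_of_mem_nonRootLeaves hv).1
  have hL := M.measurable_L_thinning O
  have hN₀ := M.measurable_N_zero_of_root_ne_zero hr (S := O)
    fun h => (M.ne_of_mem_nonRootLeaves h).2 rfl
  calc ∫ ω, t ^ ∑ v, M.N v ω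
      = ∫ ω, t ^ (M.N 0 ω + M.L M.root ω + ∑ v ∈ O, M.L v ω)
          * ∏ v ∈ O, t ^ ∑ i ∈ range (M.N 0 ω), M.I v i ω := by
        congr with ω
        rw [M.star_sum_N_of_root_ne_zero hr, pow_add, prod_pow_eq_pow_sum]
    _ = ∫ ω, t ^ (M.N 0 ω + M.L M.root ω + ∑ v ∈ O, M.L v ω)
          * (∏ v ∈ O, (1 - alpha s(M.pa v, v) + alpha s(M.pa v, v) * t)) ^ M.N 0 ω :=
        M.integral_mul_prod_pow_thinning hO hN₀ (by fun_prop) (fun _ => abs_pow_le_one ht _) ht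
    _ = _ := by
        rw [prod_congr rfl fun v hv => by rw [M.star_alpha_eq halpha (hO v hv)], prod_const]
        congr with ω
        rw [mul_pow]
        ring

theorem integral_pow_sum_N_star_of_root_ne_zero
    (ha : a ∈ Set.Icc (0 : ℝ) 1) (halpha : ∀ e ∈ (starGraph d).edgeSet, alpha e = a)
    (hr : M.root ≠ 0) {t : ℝ} (ht : |t| ≤ 1) :
    ∫ ω, t ^ ∑ v, M.N v ω = Real.exp (lam * (t * (1 - a + a * t) ^ (d - 1) - 1))
      * Real.exp (lam * (1 - a) * (t - 1)) ^ (d - 1) := by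
  set r := M.root
  set O := M.nonRootLeaves
  have hO := fun v (hv : v ∈ O) => M.ne_of_mem_nonRootLeaves hv
  obtain ⟨u, hu_def⟩ : ∃ u, u = t * (1 - a + a * t) ^ #O := ⟨_, rfl⟩
  have hu : |u| ≤ 1 := by
    rw [hu_def, abs_mul]
    exact mul_le_one₀ ht (abs_nonneg _) (abs_pow_le_one (abs_one_sub_add_mul_le_one ha ht) _)
  have hv : |t * (1 - a + a * u)| ≤ 1 := by
    rw [abs_mul]
    exact mul_le_one₀ ht (abs_nonneg _) (abs_one_sub_add_mul_le_one ha hu)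
  have hL := M.measurable_L_thinning {0}
  have hLr : ∀ v ∈ insert 0 O, Measurable[sigmaCoords M.inputs {.inl r}ᶜ] (M.L v) :=
    fun v hv => M.measurable_L_compl_singleton <| by
      rcases mem_insert.1 hv with rfl | hv
      exacts [hr.symm, (hO v hv).1]
  have hL₀ : ∀ v ∈ O, Measurable[sigmaCoords M.inputs {.inl 0}ᶜ] (M.L v) := fun v hv =>
    M.measurable_L_compl_singleton (hO v hv).2
  calc ∫ ω, t ^ ∑ v, M.N v ω
      = ∫ ω, (t ^ (M.L r ω + ∑ v ∈ O, M.L v ω) * u ^ M.L 0 ω)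
          * ∏ v ∈ {0}, u ^ ∑ i ∈ range (M.L r ω), M.I v i ω := by
        rw [M.integral_pow_sum_N_star_eq_of_root_ne_zero halpha hr ht, ← hu_def]
        congr with ω
        rw [M.star_N_zero_of_root_ne_zero hr ω, prod_singleton, pow_add]
        ring
    _ = ∫ ω, (t ^ (M.L r ω + ∑ v ∈ O, M.L v ω) * u ^ M.L 0 ω)
          * (∏ v ∈ {0}, (1 - alpha s(M.pa v, v) + alpha s(M.pa v, v) * u)) ^ M.L r ω :=
        M.integral_mul_prod_pow_thinning (by simpa using hr.symm) (hL r) (by fun_prop)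
          (fun ω => by
            rw [abs_mul]
            exact mul_le_one₀ (abs_pow_le_one ht _) (abs_nonneg _) (abs_pow_le_one hu _)) hu
    _ = ∫ ω, (t * (1 - a + a * u)) ^ M.L r ω * (u ^ M.L 0 ω * t ^ ∑ v ∈ O, M.L v ω) := by
        rw [prod_singleton, M.star_alpha_eq halpha hr.symm]
        congr with ω
        rw [mul_pow]
        ring
    _ = _ := by
        rw [M.integral_comp_L_mul r _ (by fun_prop (disch := simp_all)),
          M.integral_comp_L_mul 0 _ (by fun_prop (disch := assumption)),
          M.integral_pow_L_root hv, M.integral_pow_L hr.symm hu, M.star_alpha_eq halpha hr.symm,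
          M.integral_pow_sum_L (fun v hv => (hO v hv).1) ht,
          prod_congr rfl fun v hv => by rw [M.star_alpha_eq halpha (hO v hv).1], prod_const,
          ← M.card_nonRootLeaves_add_one hr, hu_def]
        simp only [← Real.exp_nat_mul, ← Real.exp_add]
        congr 1
        push_cast
        ring

end Star

end MPMRF

theorem mpmrf_star_sum_pgf_general (d : ℕ) [NeZero d]
    (lam a : ℝ) (ha : a ∈ Set.Icc (0 : ℝ) 1)
    (alpha : Sym2 (Fin d) → ℝ)
    (halpha : ∀ e ∈ (starGraph d).edgeSet, alpha e = a)
    (Ω : Type) [MeasureSpace Ω]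
    (M : MPMRF (starGraph d) lam alpha Ω) :
    ∀ t ∈ Set.Icc (-1 : ℝ) 1,
      ∫ ω, (t : ℝ) ^ (∑ v : Fin d, M.N v ω) ∂ℙ
        = Real.exp (lam * (a + (1 - a) * (d : ℝ))
            * ((t * (1 - a + a * t) ^ (d - 1) + (1 - a) * ((d : ℝ) - 1) * t)
                / (a + (1 - a) * (d : ℝ)) - 1)) := by
  intro t ht
  have habs : |t| ≤ 1 := abs_le.2 ht
  have hpgf : ∫ ω, t ^ ∑ v, M.N v ω = Real.exp (lam * (t * (1 - a + a * t) ^ (d - 1) - 1))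
      * Real.exp (lam * (1 - a) * (t - 1)) ^ (d - 1) := by
    rcases eq_or_ne M.root 0 with hr | hr
    · exact M.integral_pow_sum_N_star_of_root_eq_zero ha halpha hr habs
    · exact M.integral_pow_sum_N_star_of_root_ne_zero ha halpha hr habs
  have hpos : 0 < a + (1 - a) * (d : ℝ) := by
    have : (1 : ℝ) ≤ d := by exact_mod_cast NeZero.one_le
    nlinarith [ha.1, ha.2]
  rw [hpgf, ← Real.exp_nat_mul, ← Real.exp_add, Nat.cast_sub NeZero.one_le]
  congr 1
  field_simp
  push_cast
  ring

/-- Pgf of the sum on a star: for the `d`-vertex star (`d ≥ 2`) with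
common dependence parameter `a ∈ [0,1]` on every edge,
`E[t^M] = exp(λ(a + (1−a)d) ((t(1−a+at)^{d−1} + (1−a)(d−1)t)/(a + (1−a)d) − 1))`
for `t ∈ [−1,1]`. -/
theorem mpmrf_star_sum_pgf (d : ℕ) [NeZero d] (hd : 2 ≤ d)
    (lam a : ℝ) (ha : a ∈ Set.Icc (0 : ℝ) 1)
    (alpha : Sym2 (Fin d) → ℝ)
    (halpha : ∀ e ∈ (starGraph d).edgeSet, alpha e = a)
    (Ω : Type) [MeasureSpace Ω] [IsProbabilityMeasure (ℙ : Measure Ω)]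
    (M : MPMRF (starGraph d) lam alpha Ω) :
    ∀ t ∈ Set.Icc (-1 : ℝ) 1,
      ∫ ω, (t : ℝ) ^ (∑ v : Fin d, M.N v ω) ∂ℙ
        = Real.exp (lam * (a + (1 - a) * (d : ℝ))
            * ((t * (1 - a + a * t) ^ (d - 1) + (1 - a) * ((d : ℝ) - 1) * t)
                / (a + (1 - a) * (d : ℝ)) - 1)) :=
  mpmrf_star_sum_pgf_general d lam a ha alpha halpha Ω M
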